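/- Theorem 3.1, direction (ii) ⇒ (i) and (iii): Suppose κ_k > 0 for all k, and suppose P : ℤ^d_{≥0} × [0,∞) → ℝ is a solution of the chemical master equation such that there is a function c : [0,∞) → ℝ^d_{>0} with P(x,t) = ∏_{i=1}^d e^{−c_i(t)} c_i(t)^{x_i}/x_i! for all x ∈ ℤ^d_{≥0} and t ≥ 0. Then c is differentiable, c solves the mass-action ODE c'(t) = Σ_k κ_k c(t)^{y_k} ζ_k, and c satisfies the DR condition. -/

import Mathlib

open Finset

/-- Monomial `u^v = ∏ i, u i ^ v i` (with the convention `0^0 = 1`). -/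
noncomputable def monPow {d : ℕ} (u : Fin d → ℝ) (v : Fin d → ℕ) : ℝ :=
  ∏ i, u i ^ v i

/-- The reaction vector `ζ = y' - y`, viewed as a real vector. -/
def zetaVec {d : ℕ} (y y' : Fin d → ℕ) : Fin d → ℝ :=
  fun i => (y' i : ℝ) - (y i : ℝ)

/-- Stochastic mass action intensity `λ_k(x) = κ_k ∏_i x_i!/(x_i - y_{ki})!`,
taken to be `0` when `x` is not componentwise at least `y_k`. -/
noncomputable def intensity {d : ℕ} (κk : ℝ) (yk : Fin d → ℕ) (x : Fin d → ℕ) : ℝ :=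
  κk * ∏ i, ((x i).descFactorial (yk i) : ℝ)

/-- Right-hand side of the deterministic mass-action ODE: `Σ_k κ_k c^{y_k} ζ_k`. -/
noncomputable def massActionRHS {d K : ℕ} (κ : Fin K → ℝ) (y y' : Fin K → Fin d → ℕ)
    (c : Fin d → ℝ) : Fin d → ℝ :=
  ∑ k, (κ k * monPow c (y k)) • zetaVec (y k) (y' k)

/-- `c` is differentiable on `[0,∞)` and solves the mass-action ODE there. -/
def solvesMassAction {d K : ℕ} (κ : Fin K → ℝ) (y y' : Fin K → Fin d → ℕ)
    (c : ℝ → Fin d → ℝ) : Prop :=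
  ∀ t ≥ (0:ℝ), HasDerivWithinAt c (massActionRHS κ y y' (c t)) (Set.Ici 0) t

/-- The dynamical and restricted (DR) complex balance condition: for every complex `z`
with `‖z‖₁ ≥ 2` and every `t ≥ 0`,
`Σ_{k : y_k = z} κ_k c(t)^z = Σ_{k : y'_k = z} κ_k c(t)^{y_k}`. -/
def DRcondition {d K : ℕ} (κ : Fin K → ℝ) (y y' : Fin K → Fin d → ℕ)
    (c : ℝ → Fin d → ℝ) : Prop :=
  ∀ z : Fin d → ℕ, 2 ≤ ∑ i, z i → ∀ t ≥ (0:ℝ),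
    ∑ k ∈ univ.filter (fun k => y k = z), κ k * monPow (c t) z
      = ∑ k ∈ univ.filter (fun k => y' k = z), κ k * monPow (c t) (y k)

/-- `P` solves the chemical master equation on `[0,∞)`:
`∂ₜ P(x,t) = Σ_k λ_k(x-ζ_k) P(x-ζ_k,t) 1{x-ζ_k ≥ 0} - Σ_k λ_k(x) P(x,t)`. -/
def solvesCME {d K : ℕ} (κ : Fin K → ℝ) (y y' : Fin K → Fin d → ℕ)
    (P : (Fin d → ℕ) → ℝ → ℝ) : Prop :=
  ∀ x : Fin d → ℕ, ∀ t ≥ (0:ℝ),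
    HasDerivWithinAt (P x)
      ((∑ k, if ∀ i, y' k i ≤ x i + y k i then
          intensity (κ k) (y k) (fun i => x i + y k i - y' k i)
            * P (fun i => x i + y k i - y' k i) t
        else 0)
       - ∑ k, intensity (κ k) (y k) x * P x t)
      (Set.Ici 0) t

/-- The product-Poisson probability mass function `∏_i e^{-c_i} c_i^{x_i}/x_i!`. -/
noncomputable def productPoisson {d : ℕ} (c : Fin d → ℝ) (x : Fin d → ℕ) : ℝ :=
  ∏ i, Real.exp (-(c i)) * (c i) ^ (x i) / (x i).factorial

/-!
Substituting the product-Poisson ansatz into the master equation and dividing by `P(x,t) > 0`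
turns it into an identity, valid for every state `x`, between linear combinations of the
normalized falling factorials `x^(z) / c^z`. On the master-equation side the coefficients form
the net flux `Σ_k κ_k c^{y_k} (δ_{y'_k} - δ_{y_k})` into each complex; on the side of
`∂ₜ log P = Σ_i c_i' (x_i / c_i - 1)` they form `Σ_i c_i' (δ_{e_i} - δ_0)`. Falling factorials
are linearly independent (they are triangular for the componentwise order), so the two fluxes
coincide. Evaluated at a complex of size `≥ 2` this is the DR condition; pushed forward along
`z ↦ z` it is the mass-action ODE. Differentiability of `c` comes from `c_i = P(e_i, ·) / P(0, ·)`.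
-/

theorem descFactorial_div_factorial_eq {m n a b : ℕ} (h : m + b = n + a) :
    (m.descFactorial a : ℝ) / m.factorial = n.descFactorial b / n.factorial := by
  by_cases ha : a ≤ m
  · have hb : b ≤ n := by omega
    have hmn : m - a = n - b := by omega
    rw [← Nat.factorial_mul_descFactorial ha, ← Nat.factorial_mul_descFactorial hb, hmn]
    have hda : (m.descFactorial a : ℝ) ≠ 0 := by
      exact_mod_cast (Nat.descFactorial_pos.2 ha).ne'
    have hdb : (n.descFactorial b : ℝ) ≠ 0 := by
      exact_mod_cast (Nat.descFactorial_pos.2 hb).ne'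
    push_cast
    field_simp
  · rw [Nat.descFactorial_eq_zero_iff_lt.2 (by omega),
      Nat.descFactorial_eq_zero_iff_lt.2 (by omega)]
    simp

section multiDescFactorial

variable {ι : Type*} [Fintype ι]

noncomputable def multiDescFactorial (x z : ι → ℕ) : ℝ :=
  ∏ i, ((x i).descFactorial (z i) : ℝ)

theorem multiDescFactorial_eq_zero_iff {x z : ι → ℕ} : multiDescFactorial x z = 0 ↔ ¬z ≤ x := by
  simp [multiDescFactorial, Finset.prod_eq_zero_iff, Nat.descFactorial_eq_zero_iff_lt, Pi.le_def]

theorem multiDescFactorial_zero (x : ι → ℕ) : multiDescFactorial x 0 = 1 := by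
  simp [multiDescFactorial]

theorem multiDescFactorial_single [DecidableEq ι] (x : ι → ℕ) (i : ι) (n : ℕ) :
    multiDescFactorial x (Pi.single i n) = (x i).descFactorial n := by
  simp [multiDescFactorial, Pi.single_apply, apply_ite]

theorem linearIndependent_multiDescFactorial :
    LinearIndependent ℝ (fun z (x : ι → ℕ) => multiDescFactorial x z) := by
  classical
  refine linearIndependent_iff'.2 fun s a hsum => ?_
  by_contra! hne
  obtain ⟨z₀, hz₀, ha₀⟩ := hne
  obtain ⟨w, hw⟩ := (s.filter (a · ≠ 0)).exists_minimal ⟨z₀, by simp [hz₀, ha₀]⟩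
  obtain ⟨hws, haw⟩ := mem_filter.1 hw.prop
  have heval := congrFun hsum w
  simp only [Finset.sum_apply, Pi.smul_apply, smul_eq_mul, Pi.zero_apply] at heval
  rw [Finset.sum_eq_single_of_mem w hws] at heval
  · exact mul_ne_zero haw (multiDescFactorial_eq_zero_iff.not.2 (not_not.2 le_rfl)) heval
  · intro z hz hzw
    by_cases haz : a z = 0
    · rw [haz, zero_mul]
    have hzw' : ¬z ≤ w := fun hle => hzw (hw.eq_of_le (mem_filter.2 ⟨hz, haz⟩) hle)
    rw [multiDescFactorial_eq_zero_iff.2 hzw', mul_zero]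

end multiDescFactorial

section complexFlux

variable {ι V R : Type*} [Fintype ι] [Ring R]

-- The net reaction flux into each complex; its vanishing at `z` is complex balance at `z`.
noncomputable def complexFlux (r : ι → R) (y y' : ι → V) : V →₀ R :=
  ∑ k, r k • (Finsupp.single (y' k) 1 - Finsupp.single (y k) 1)

theorem linearCombination_complexFlux {M : Type*} [AddCommGroup M] [Module R M] (v : V → M)
    (r : ι → R) (y y' : ι → V) :
    Finsupp.linearCombination R v (complexFlux r y y') = ∑ k, r k • (v (y' k) - v (y k)) := by
  simp [complexFlux, map_sum, map_sub, Finsupp.linearCombination_single]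

theorem complexFlux_apply [DecidableEq V] (r : ι → R) (y y' : ι → V) (z : V) :
    complexFlux r y y' z = ∑ k with y' k = z, r k - ∑ k with y k = z, r k := by
  simp [complexFlux, Finsupp.finsetSum_apply, Finsupp.single_apply, Finset.sum_filter, mul_sub,
    Finset.sum_sub_distrib]

end complexFlux

section productPoisson

variable {d : ℕ}

theorem monPow_ne_zero {c : Fin d → ℝ} (hc : ∀ i, c i ≠ 0) (v : Fin d → ℕ) : monPow c v ≠ 0 :=
  Finset.prod_ne_zero_iff.2 fun i _ => pow_ne_zero _ (hc i)

theorem monPow_zero (c : Fin d → ℝ) : monPow c 0 = 1 := by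
  simp [monPow]

theorem monPow_single (c : Fin d → ℝ) (i : Fin d) (n : ℕ) : monPow c (Pi.single i n) = c i ^ n := by
  simp [monPow, Pi.single_apply, apply_ite]

theorem productPoisson_pos {c : Fin d → ℝ} (hc : ∀ i, 0 < c i) (x : Fin d → ℕ) :
    0 < productPoisson c x :=
  Finset.prod_pos fun i _ => by have := hc i; positivity

theorem productPoisson_zero_pos (c : Fin d → ℝ) : 0 < productPoisson c 0 :=
  Finset.prod_pos fun i _ => by simp [Real.exp_pos]

theorem productPoisson_single_one (c : Fin d → ℝ) (i : Fin d) :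
    productPoisson c (Pi.single i 1) = c i * productPoisson c 0 := by
  rw [productPoisson, productPoisson, Fintype.prod_eq_mul_prod_compl i,
    Fintype.prod_eq_mul_prod_compl i, ← mul_assoc]
  congr 1
  · simp only [Pi.single_eq_same, pow_one, Nat.factorial_one, Nat.cast_one, div_one,
      Pi.zero_apply, pow_zero, mul_one, Nat.factorial_zero]
    ring
  · refine Finset.prod_congr rfl fun j hj => ?_
    have hji : j ≠ i := by simpa using hj
    simp [hji]

theorem productPoisson_eq_exp {c : Fin d → ℝ} (hc : ∀ i, 0 < c i) (x : Fin d → ℕ) :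
    productPoisson c x =
      Real.exp (∑ i, ((x i : ℝ) * Real.log (c i) - c i)) / ∏ i, ((x i).factorial : ℝ) := by
  rw [Real.exp_sum, ← Finset.prod_div_distrib]
  refine Finset.prod_congr rfl fun i _ => ?_
  rw [Real.exp_sub, Real.exp_nat_mul, Real.exp_log (hc i), Real.exp_neg]
  ring

theorem hasDerivWithinAt_productPoisson {c : ℝ → Fin d → ℝ} {g : Fin d → ℝ} {s : Set ℝ} {t : ℝ}
    (hg : HasDerivWithinAt c g s t) (ht : t ∈ s) (hpos : ∀ t' ∈ s, ∀ i, 0 < c t' i)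
    (x : Fin d → ℕ) :
    HasDerivWithinAt (fun t' => productPoisson (c t') x)
      ((∑ i, g i * (x i / c t i - 1)) * productPoisson (c t) x) s t := by
  have hexponent : HasDerivWithinAt (fun t' => ∑ i, ((x i : ℝ) * Real.log (c t' i) - c t' i))
      (∑ i, g i * (x i / c t i - 1)) s t := by
    refine HasDerivWithinAt.fun_sum fun i _ => ?_
    have hgi := hasDerivWithinAt_pi.1 hg i
    convert ((hgi.log (hpos t ht i).ne').const_mul (x i : ℝ)).fun_sub hgi using 1
    ring
  refine ((hexponent.exp.div_const _).congr (fun t' ht' => productPoisson_eq_exp (hpos t' ht') x)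
    (productPoisson_eq_exp (hpos t ht) x)).congr_deriv ?_
  rw [productPoisson_eq_exp (hpos t ht)]
  ring

theorem differentiableWithinAt_of_productPoisson {c : ℝ → Fin d → ℝ} {s : Set ℝ} {t : ℝ}
    (h : ∀ x, DifferentiableWithinAt ℝ (fun t' => productPoisson (c t') x) s t) :
    DifferentiableWithinAt ℝ c s t := by
  refine differentiableWithinAt_pi.2 fun i => ?_
  have hc : (fun t' => c t' i) =
      fun t' => productPoisson (c t') (Pi.single i 1) / productPoisson (c t') 0 := by
    funext t'
    rw [productPoisson_single_one, mul_div_cancel_right₀ _ (productPoisson_zero_pos _).ne']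
  rw [hc]
  exact (h _).div (h 0) (productPoisson_zero_pos _).ne'

end productPoisson

section masterEquation

variable {d K : ℕ}

theorem multiDescFactorial_mul_productPoisson_mul_monPow {x x' y y' : Fin d → ℕ}
    (h : x' + y' = x + y) (c : Fin d → ℝ) :
    multiDescFactorial x' y * productPoisson c x' * monPow c y' =
      multiDescFactorial x y' * productPoisson c x * monPow c y := by
  simp only [multiDescFactorial, productPoisson, monPow, ← Finset.prod_mul_distrib]
  refine Finset.prod_congr rfl fun i _ => ?_
  have hi : x' i + y' i = x i + y i := congrFun h i
  calc ((x' i).descFactorial (y i) : ℝ) * (Real.exp (-c i) * c i ^ x' i / (x' i).factorial)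
        * c i ^ y' i
      = (x' i).descFactorial (y i) / (x' i).factorial * Real.exp (-c i) * c i ^ (x' i + y' i) := by
        ring
    _ = (x i).descFactorial (y' i) / (x i).factorial * Real.exp (-c i) * c i ^ (x i + y i) := by
        rw [descFactorial_div_factorial_eq hi, hi]
    _ = ((x i).descFactorial (y' i) : ℝ) * (Real.exp (-c i) * c i ^ x i / (x i).factorial)
        * c i ^ y i := by
        ring

theorem intensity_eq_mul_multiDescFactorial (κk : ℝ) (yk x : Fin d → ℕ) :
    intensity κk yk x = κk * multiDescFactorial x yk :=
  rfl

noncomputable def cmeRHS (κ : Fin K → ℝ) (y y' : Fin K → Fin d → ℕ) (p : (Fin d → ℕ) → ℝ)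
    (x : Fin d → ℕ) : ℝ :=
  (∑ k, if ∀ i, y' k i ≤ x i + y k i then
      intensity (κ k) (y k) (fun i => x i + y k i - y' k i) * p (fun i => x i + y k i - y' k i)
    else 0)
   - ∑ k, intensity (κ k) (y k) x * p x

noncomputable def normalizedDescFactorial (c : Fin d → ℝ) (z x : Fin d → ℕ) : ℝ :=
  multiDescFactorial x z / monPow c z

theorem linearIndependent_normalizedDescFactorial {c : Fin d → ℝ} (hc : ∀ i, c i ≠ 0) :
    LinearIndependent ℝ (normalizedDescFactorial c) := by
  convert linearIndependent_multiDescFactorial.units_smul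
    fun z => Units.mk0 (monPow c z)⁻¹ (inv_ne_zero (monPow_ne_zero hc z)) using 1
  funext z x
  simp [normalizedDescFactorial, div_eq_inv_mul]

theorem cmeRHS_productPoisson (κ : Fin K → ℝ) (y y' : Fin K → Fin d → ℕ) {c : Fin d → ℝ}
    (hc : ∀ i, 0 < c i) (x : Fin d → ℕ) :
    cmeRHS κ y y' (productPoisson c) x =
      Finsupp.linearCombination ℝ (normalizedDescFactorial c)
        (complexFlux (fun k => κ k * monPow c (y k)) y y') x * productPoisson c x := by
  have hmon := monPow_ne_zero fun i => (hc i).ne'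
  rw [linearCombination_complexFlux, cmeRHS, Finset.sum_apply, Finset.sum_mul,
    ← Finset.sum_sub_distrib]
  refine Finset.sum_congr rfl fun k _ => ?_
  simp only [intensity_eq_mul_multiDescFactorial, Pi.smul_apply, Pi.sub_apply, smul_eq_mul,
    normalizedDescFactorial]
  split_ifs with hle
  · have hshift : (fun i => x i + y k i - y' k i) + y' k = x + y k := by
      funext i
      exact Nat.sub_add_cancel (hle i)
    have key := multiDescFactorial_mul_productPoisson_mul_monPow hshift c
    field_simp [hmon]
    linear_combination κ k * key
  · have hzero : multiDescFactorial x (y' k) = 0 :=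
      multiDescFactorial_eq_zero_iff.2 fun hle' =>
        hle fun i => (hle' i).trans (Nat.le_add_right _ _)
    rw [hzero]
    field_simp [hmon]
    ring

end masterEquation

section rateEquations

variable {d K : ℕ}

theorem linearCombination_normalizedDescFactorial_complexFlux_single (c g : Fin d → ℝ)
    (x : Fin d → ℕ) :
    Finsupp.linearCombination ℝ (normalizedDescFactorial c)
        (complexFlux g (fun _ => 0) (fun i => Pi.single i 1)) x =
      ∑ i, g i * (x i / c i - 1) := by
  simp [linearCombination_complexFlux, normalizedDescFactorial, multiDescFactorial_single,
    multiDescFactorial_zero, monPow_single, monPow_zero]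

theorem complexFlux_eq_of_cmeRHS_productPoisson (κ : Fin K → ℝ) (y y' : Fin K → Fin d → ℕ)
    {c : ℝ → Fin d → ℝ} {g : Fin d → ℝ} {s : Set ℝ} {t : ℝ} (ht : t ∈ s)
    (hs : UniqueDiffWithinAt ℝ s t) (hpos : ∀ t' ∈ s, ∀ i, 0 < c t' i)
    (hg : HasDerivWithinAt c g s t)
    (hcme : ∀ x, HasDerivWithinAt (fun t' => productPoisson (c t') x)
      (cmeRHS κ y y' (productPoisson (c t)) x) s t) :
    complexFlux (fun k => κ k * monPow (c t) (y k)) y y' =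
      complexFlux g (fun _ => 0) (fun i => Pi.single i 1) := by
  refine (linearIndependent_normalizedDescFactorial fun i => (hpos t ht i).ne')
    |>.finsuppLinearCombination_injective (funext fun x => ?_)
  have hderiv := hs.eq_deriv s (hcme x) (hasDerivWithinAt_productPoisson hg ht hpos x)
  rw [cmeRHS_productPoisson κ y y' (hpos t ht),
    ← linearCombination_normalizedDescFactorial_complexFlux_single] at hderiv
  exact mul_right_cancel₀ (productPoisson_pos (hpos t ht) x).ne' hderiv

theorem massActionRHS_eq_linearCombination_complexFlux (κ : Fin K → ℝ)
    (y y' : Fin K → Fin d → ℕ) (c : Fin d → ℝ) :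
    massActionRHS κ y y' c = Finsupp.linearCombination ℝ (fun (z : Fin d → ℕ) j => (z j : ℝ))
      (complexFlux (fun k => κ k * monPow c (y k)) y y') := by
  rw [linearCombination_complexFlux]
  rfl

theorem linearCombination_complexFlux_single (g : Fin d → ℝ) :
    Finsupp.linearCombination ℝ (fun (z : Fin d → ℕ) j => (z j : ℝ))
      (complexFlux g (fun _ => 0) (fun i => Pi.single i 1)) = g := by
  ext j
  simp [linearCombination_complexFlux, Pi.single_apply]

theorem complexFlux_single_apply_eq_zero (g : Fin d → ℝ) {z : Fin d → ℕ} (hz : 2 ≤ ∑ i, z i) :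
    complexFlux g (fun _ => 0) (fun i => Pi.single i 1) z = 0 := by
  have hsingle : ∀ i, Pi.single i 1 ≠ z := by rintro i rfl; simp at hz
  have hzero : (0 : Fin d → ℕ) ≠ z := by rintro rfl; simp at hz
  simp [complexFlux_apply, hsingle, hzero]

theorem drCondition_of_complexFlux_eq_zero (κ : Fin K → ℝ) (y y' : Fin K → Fin d → ℕ)
    {c : ℝ → Fin d → ℝ}
    (h : ∀ t ≥ (0:ℝ), ∀ z : Fin d → ℕ, 2 ≤ ∑ i, z i →
      complexFlux (fun k => κ k * monPow (c t) (y k)) y y' z = 0) :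
    DRcondition κ y y' c := by
  intro z hz t ht
  have hbalance := h t ht z hz
  rw [complexFlux_apply, sub_eq_zero] at hbalance
  rw [hbalance]
  exact Finset.sum_congr rfl fun k hk => by rw [(mem_filter.1 hk).2]

end rateEquations

theorem productPoisson_solution_implies_massAction_and_DR
    {d K : ℕ} (κ : Fin K → ℝ) (y y' : Fin K → Fin d → ℕ)
    (P : (Fin d → ℕ) → ℝ → ℝ) (c : ℝ → Fin d → ℝ)
    (hcpos : ∀ t ≥ (0:ℝ), ∀ i, 0 < c t i)
    (hCME : solvesCME κ y y' P)
    (hPoisson : ∀ x : Fin d → ℕ, ∀ t ≥ (0:ℝ), P x t = productPoisson (c t) x) :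
    solvesMassAction κ y y' c ∧ DRcondition κ y y' c := by
  have hcme : ∀ t ≥ (0:ℝ), ∀ x, HasDerivWithinAt (fun t' => productPoisson (c t') x)
      (cmeRHS κ y y' (productPoisson (c t)) x) (Set.Ici 0) t := by
    intro t ht x
    have hP : HasDerivWithinAt (P x) (cmeRHS κ y y' (fun x => P x t) x) (Set.Ici 0) t :=
      hCME x t ht
    rw [show (fun x => P x t) = productPoisson (c t) from funext fun x => hPoisson x t ht] at hP
    exact hP.congr (fun t' ht' => (hPoisson x t' ht').symm) (hPoisson x t ht).symm
  have hc : ∀ t ≥ (0:ℝ), HasDerivWithinAt c (derivWithin c (Set.Ici 0) t) (Set.Ici 0) t :=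
    fun t ht => (differentiableWithinAt_of_productPoisson fun x =>
      (hcme t ht x).differentiableWithinAt).hasDerivWithinAt
  have hflux : ∀ t ≥ (0:ℝ), complexFlux (fun k => κ k * monPow (c t) (y k)) y y' =
      complexFlux (derivWithin c (Set.Ici 0) t) (fun _ => 0) (fun i => Pi.single i 1) :=
    fun t ht => complexFlux_eq_of_cmeRHS_productPoisson κ y y' ht (uniqueDiffOn_Ici 0 t ht)
      hcpos (hc t ht) (hcme t ht)
  refine ⟨fun t ht => ?_, drCondition_of_complexFlux_eq_zero κ y y' fun t ht z hz => ?_⟩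
  · rw [massActionRHS_eq_linearCombination_complexFlux, hflux t ht,
      linearCombination_complexFlux_single]
    exact hc t ht
  · rw [hflux t ht]
    exact complexFlux_single_apply_eq_zero _ hz
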